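/- m(8) ≤ 2·m(5)·m(3) + 8·m(3)² + 2^7 + C(8,4)/2. In particular, using m(5) ≤ 51 and m(3) = 7, m(8) ≤ 1269. -/

import Mathlib

/-- A family of finsets is `n`-uniform if every hyperedge has `n` elements. -/
def IsUniform (n : ℕ) (E : Finset (Finset ℕ)) : Prop := ∀ e ∈ E, e.card = n

/-- A hypergraph (family of hyperedges) is 2-colorable if there is a Red/Blue
coloring of the vertices such that no hyperedge is monochromatic. -/
def Colorable2 (E : Finset (Finset ℕ)) : Prop :=
  ∃ χ : ℕ → Bool, ∀ e ∈ E, (∃ v ∈ e, χ v = true) ∧ (∃ v ∈ e, χ v = false)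

/-- `m n` is the least number of hyperedges in a non-2-colorable `n`-uniform hypergraph. -/
noncomputable def m (n : ℕ) : ℕ :=
  sInf {k | ∃ E : Finset (Finset ℕ), IsUniform n E ∧ ¬ Colorable2 E ∧ E.card = k}

/-- A hyperedge is monochromatic under `χ` if all its vertices get the same color. -/
def Mono (χ : ℕ → Bool) (s : Finset ℕ) : Prop :=
  (∀ x ∈ s, χ x = true) ∨ (∀ x ∈ s, χ x = false)

/-
Let `E5`, `E3` be non-2-colourable, 5- resp. 3-uniform. On disjoint vertex sets take a copy of
`E5`, two copies `F`, `G` of `E3` and 8 pairs `{aᵢ, bᵢ}`; the edges are `e ∪ f` (`e ∈ E5`,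
`f ∈ F ∪ G`), `{aᵢ, bᵢ} ∪ f ∪ g` (`f ∈ F`, `g ∈ G`), and the transversals of the pairs taking
`bᵢ` for a set of indices of size in `{1, 3, 4, 6, 8}`. Under a 2-colouring `E5` has a
monochromatic edge of some colour `c`, hence `F` and `G` have monochromatic edges of colour
`!c`, hence every pair has a vertex of colour `c`, and then one of the transversals is
monochromatic.
-/

open Finset
open scoped FinsetFamily

section Hypergraph

variable {E F : Finset (Finset ℕ)} {χ : ℕ → Bool} {c : Bool}

def HasMonoEdge (χ : ℕ → Bool) (c : Bool) (E : Finset (Finset ℕ)) : Prop :=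
  ∃ e ∈ E, ∀ v ∈ e, χ v = c

theorem not_colorable2_iff : ¬ Colorable2 E ↔ ∀ χ, ∃ c, HasMonoEdge χ c E := by
  constructor
  · intro hE χ
    by_contra! hχ
    refine hE ⟨χ, fun e he => ⟨?_, ?_⟩⟩
    · obtain ⟨v, hv, hχv⟩ := not_forall₂.1 (fun h => hχ false ⟨e, he, h⟩)
      exact ⟨v, hv, by simpa using hχv⟩
    · obtain ⟨v, hv, hχv⟩ := not_forall₂.1 (fun h => hχ true ⟨e, he, h⟩)
      exact ⟨v, hv, by simpa using hχv⟩
  · rintro hE ⟨χ, hχ⟩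
    obtain ⟨c, e, he, hc⟩ := hE χ
    obtain ⟨⟨v, hv, hχv⟩, ⟨w, hw, hχw⟩⟩ := hχ e he
    cases c
    · simp [hc v hv] at hχv
    · simp [hc w hw] at hχw

theorem HasMonoEdge.mono (h : HasMonoEdge χ c E) (hEF : E ⊆ F) : HasMonoEdge χ c F :=
  let ⟨e, he, hc⟩ := h
  ⟨e, hEF he, hc⟩

theorem HasMonoEdge.sups (hE : HasMonoEdge χ c E) (hF : HasMonoEdge χ c F) :
    HasMonoEdge χ c (E ⊻ F) := by
  obtain ⟨e, he, hce⟩ := hE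
  obtain ⟨f, hf, hcf⟩ := hF
  refine ⟨e ⊔ f, sup_mem_sups he hf, fun v hv => ?_⟩
  rcases mem_union.1 hv with hv | hv
  exacts [hce v hv, hcf v hv]

theorem HasMonoEdge.image_map (f : ℕ ↪ ℕ) (h : HasMonoEdge (χ ∘ f) c E) :
    HasMonoEdge χ c (E.image (map f)) := by
  obtain ⟨e, he, hc⟩ := h
  refine ⟨e.map f, mem_image_of_mem _ he, fun v hv => ?_⟩
  obtain ⟨w, hw, rfl⟩ := mem_map.1 hv
  exact hc w hw

theorem IsUniform.image_map {n : ℕ} (f : ℕ ↪ ℕ) (h : IsUniform n E) :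
    IsUniform n (E.image (map f)) := by
  intro e' he'
  obtain ⟨e, he, rfl⟩ := mem_image.1 he'
  rw [card_map, h e he]

theorem IsUniform.union {n : ℕ} (hE : IsUniform n E)
    (hF : IsUniform n F) : IsUniform n (E ∪ F) := by
  intro e he
  rcases mem_union.1 he with he | he
  exacts [hE e he, hF e he]

theorem IsUniform.sups {p q : ℕ} {S T : Set ℕ} (hE : IsUniform p E) (hF : IsUniform q F)
    (hES : ∀ e ∈ E, ↑e ⊆ S) (hFT : ∀ f ∈ F, ↑f ⊆ T) (hST : Disjoint S T) :
    IsUniform (p + q) (E ⊻ F) := by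
  intro g hg
  obtain ⟨e, he, f, hf, rfl⟩ := mem_sups.1 hg
  have hef : Disjoint e f := by
    rw [← disjoint_coe]
    exact hST.mono (hES e he) (hFT f hf)
  rw [sup_eq_union, card_union_of_disjoint hef, hE e he, hF f hf]

theorem coe_subset_union_of_mem_sups {S T : Set ℕ} (hES : ∀ e ∈ E, ↑e ⊆ S)
    (hFT : ∀ f ∈ F, ↑f ⊆ T) : ∀ g ∈ E ⊻ F, ↑g ⊆ S ∪ T := by
  intro g hg
  obtain ⟨e, he, f, hf, rfl⟩ := mem_sups.1 hg
  rw [sup_eq_union, coe_union]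
  exact Set.union_subset_union (hES e he) (hFT f hf)

end Hypergraph

theorem m_le_card {n : ℕ} {E : Finset (Finset ℕ)} (hu : IsUniform n E)
    (hc : ¬ Colorable2 E) : m n ≤ E.card :=
  Nat.sInf_le ⟨E, hu, hc, rfl⟩

theorem not_colorable2_powersetCard (n : ℕ) :
    ¬ Colorable2 (powersetCard n (range (2 * n - 1))) := by
  refine not_colorable2_iff.2 fun χ => ?_
  obtain ⟨c, hc⟩ : ∃ c, n ≤ ((range (2 * n - 1)).filter (χ · = c)).card := by
    have hsplit := card_filter_add_card_filter_not (s := range (2 * n - 1)) (χ · = true)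
    simp only [Bool.not_eq_true, card_range] at hsplit
    by_contra! h
    have := h true
    have := h false
    omega
  obtain ⟨e, he, hcard⟩ := exists_subset_card_eq hc
  exact ⟨c, e, mem_powersetCard.2 ⟨he.trans (filter_subset _ _), hcard⟩,
    fun v hv => (mem_filter.1 (he hv)).2⟩

theorem exists_isUniform_not_colorable2_card_eq_m (n : ℕ) :
    ∃ E : Finset (Finset ℕ), IsUniform n E ∧ ¬ Colorable2 E ∧ E.card = m n :=
  Nat.sInf_mem
    (s := {k | ∃ E : Finset (Finset ℕ), IsUniform n E ∧ ¬ Colorable2 E ∧ E.card = k})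
    ⟨_, _, fun _ he => (mem_powersetCard.1 he).2, not_colorable2_powersetCard n, rfl⟩

section Transversal

variable (a b : ℕ → ℕ) (n : ℕ)

def pairs : Finset (Finset ℕ) :=
  (range n).image fun i => {a i, b i}

def transversal (s : Finset ℕ) : Finset ℕ :=
  (range n).image fun i => if i ∈ s then b i else a i

def transversals (W : Finset ℕ) : Finset (Finset ℕ) :=
  (W.biUnion fun k => powersetCard k (range n)).image (transversal a b n)

variable {a b n} {W s : Finset ℕ} {χ : ℕ → Bool} {c : Bool}

theorem card_pairs_le : (pairs a b n).card ≤ n :=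
  card_image_le.trans (card_range n).le

theorem card_transversals_le : (transversals a b n W).card ≤ ∑ k ∈ W, n.choose k :=
  card_image_le.trans <| card_biUnion_le.trans <| by
    simp only [card_powersetCard, card_range, le_refl]

theorem isUniform_pairs (hab : ∀ i, a i ≠ b i) : IsUniform 2 (pairs a b n) := by
  intro e he
  obtain ⟨i, -, rfl⟩ := mem_image.1 he
  exact card_pair (hab i)

theorem isUniform_transversals (g : ℕ → ℕ) (hga : ∀ i, g (a i) = i) (hgb : ∀ i, g (b i) = i) :
    IsUniform n (transversals a b n W) := by
  intro e he
  obtain ⟨s, -, rfl⟩ := mem_image.1 he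
  have hg : ∀ i, g (if i ∈ s then b i else a i) = i := fun i => by split_ifs <;> simp [hga, hgb]
  rw [transversal, card_image_of_injective _ fun i j hij => by simpa [hg] using congrArg g hij,
    card_range]

theorem hasMonoEdge_transversals_of_forall (hs : s ⊆ range n) (hsW : s.card ∈ W)
    (h : ∀ i < n, χ (if i ∈ s then b i else a i) = c) :
    HasMonoEdge χ c (transversals a b n W) := by
  refine ⟨transversal a b n s, mem_image_of_mem _ ?_, fun v hv => ?_⟩
  · exact mem_biUnion.2 ⟨s.card, hsW, mem_powersetCard.2 ⟨hs, rfl⟩⟩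
  · obtain ⟨i, hi, rfl⟩ := mem_image.1 hv
    exact h i (mem_range.1 hi)

/- With `B` the indices whose `b`-vertex has colour `c` and `D ⊆ B` those whose `a`-vertex
does not, the `c`-coloured transversals are exactly `transversal a b n s` for `D ⊆ s ⊆ B`.
If `D ⊂ B` their sizes fill an interval of length at least one, which meets `W`; if `D = B`,
the transversal picking `b` off `B` is coloured `!c` and has size `n - #B`. -/
theorem exists_hasMonoEdge_transversals (hstep : ∀ k < n, k ∈ W ∨ k + 1 ∈ W)
    (hcompl : ∀ k ≤ n, k ∈ W ∨ n - k ∈ W) (hpairs : ¬ HasMonoEdge χ (!c) (pairs a b n)) :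
    ∃ c', HasMonoEdge χ c' (transversals a b n W) := by
  classical
  have hb : ∀ i < n, χ (a i) ≠ c → χ (b i) = c := by
    intro i hi ha
    by_contra hb
    refine hpairs ⟨{a i, b i}, mem_image_of_mem _ (mem_range.2 hi), fun v hv => ?_⟩
    rcases mem_insert.1 hv with rfl | hv
    · exact Bool.eq_not.2 ha
    · exact (mem_singleton.1 hv).symm ▸ Bool.eq_not.2 hb
  set B := (range n).filter fun i => χ (b i) = c
  set D := (range n).filter fun i => χ (a i) ≠ c
  have hDB : D ⊆ B := fun i hi => by
    obtain ⟨hi, ha⟩ := mem_filter.1 hi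
    exact mem_filter.2 ⟨hi, hb i (mem_range.1 hi) ha⟩
  have hBn : B.card ≤ n := (card_filter_le _ _).trans (card_range n).le
  by_cases hDB' : D = B
  · rcases hcompl B.card hBn with hW | hW
    · refine ⟨c, hasMonoEdge_transversals_of_forall (filter_subset _ _) hW fun i hi => ?_⟩
      split_ifs with hiB
      · exact (mem_filter.1 hiB).2
      · by_contra ha
        exact hiB (hDB'.subset (mem_filter.2 ⟨mem_range.2 hi, ha⟩))
    · have hcard : (range n \ B).card = n - B.card := by
        rw [card_sdiff_of_subset (filter_subset _ _), card_range]
      refine ⟨!c, hasMonoEdge_transversals_of_forall sdiff_subset (hcard ▸ hW) fun i hi => ?_⟩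
      split_ifs with hiB
      · exact Bool.eq_not.2 fun hb => (mem_sdiff.1 hiB).2 (mem_filter.2 ⟨mem_range.2 hi, hb⟩)
      · have hiD : i ∈ D := hDB'.symm.subset (by simpa [hi] using hiB)
        exact Bool.eq_not.2 (mem_filter.1 hiD).2
  · have hlt : D.card < B.card := card_lt_card (ssubset_of_subset_of_ne hDB hDB')
    obtain ⟨k, hkW, hDk, hkB⟩ : ∃ k ∈ W, D.card ≤ k ∧ k ≤ B.card := by
      rcases hstep D.card (by omega) with hW | hW
      exacts [⟨_, hW, le_rfl, hlt.le⟩, ⟨_, hW, Nat.le_succ _, hlt⟩]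
    obtain ⟨s, hDs, hsB, rfl⟩ := exists_subsuperset_card_eq hDB hDk hkB
    refine ⟨c, hasMonoEdge_transversals_of_forall (hsB.trans (filter_subset _ _)) hkW
      fun i hi => ?_⟩
    split_ifs with his
    · exact (mem_filter.1 (hsB his)).2
    · by_contra ha
      exact his (hDs (mem_filter.2 ⟨mem_range.2 hi, ha⟩))

end Transversal

def residueEmb (r : ℕ) : ℕ ↪ ℕ :=
  ⟨fun v => 5 * v + r, fun x y h => by simp only at h; omega⟩

def residueCopy (r : ℕ) (E : Finset (Finset ℕ)) : Finset (Finset ℕ) :=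
  E.image (map (residueEmb r))

theorem coe_subset_of_mem_residueCopy {r : ℕ} (hr : r < 5) {E : Finset (Finset ℕ)} :
    ∀ e ∈ residueCopy r E, ↑e ⊆ {v | v % 5 = r} := by
  intro e he v hv
  obtain ⟨e, -, rfl⟩ := mem_image.1 he
  obtain ⟨w, -, rfl⟩ := mem_map.1 hv
  change (5 * w + r) % 5 = r
  omega

def auxPairs : Finset (Finset ℕ) := pairs (5 * · + 3) (5 * · + 4) 8

-- `{1, 3, 4, 6, 8}` meets every `{k, k + 1}` and every `{k, 8 - k}`, with
-- `∑ k ∈ {1, 3, 4, 6, 8}, choose 8 k = 163 = 2 ^ 7 + choose 8 4 / 2`.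
def parityEdges : Finset (Finset ℕ) := transversals (5 * · + 3) (5 * · + 4) 8 {1, 3, 4, 6, 8}

def eightGraph (E5 E3 : Finset (Finset ℕ)) : Finset (Finset ℕ) :=
  residueCopy 0 E5 ⊻ residueCopy 1 E3 ∪ residueCopy 0 E5 ⊻ residueCopy 2 E3 ∪
    auxPairs ⊻ residueCopy 1 E3 ⊻ residueCopy 2 E3 ∪ parityEdges

theorem card_eightGraph_le (E5 E3 : Finset (Finset ℕ)) :
    (eightGraph E5 E3).card ≤ 2 * E5.card * E3.card + 8 * E3.card ^ 2 + 163 := by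
  have hcopy (r : ℕ) (E : Finset (Finset ℕ)) : (residueCopy r E).card ≤ E.card := card_image_le
  have hparity : parityEdges.card ≤ 163 := card_transversals_le.trans (by decide)
  have hpairs : auxPairs.card ≤ 8 := card_pairs_le
  have h5 := hcopy 0 E5
  have h13 := hcopy 1 E3
  have h23 := hcopy 2 E3
  calc (eightGraph E5 E3).card
      ≤ E5.card * E3.card + E5.card * E3.card + 8 * E3.card * E3.card + 163 := by
        refine (card_union_le _ _).trans (add_le_add ?_ hparity)
        refine (card_union_le _ _).trans (add_le_add ?_ ?_)
        · refine (card_union_le _ _).trans (add_le_add ?_ ?_) <;>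
            exact (card_sups_le _ _).trans (Nat.mul_le_mul h5 (hcopy _ _))
        · exact (card_sups_le _ _).trans (Nat.mul_le_mul ((card_sups_le _ _).trans
            (Nat.mul_le_mul hpairs h13)) h23)
    _ = 2 * E5.card * E3.card + 8 * E3.card ^ 2 + 163 := by ring

theorem isUniform_eightGraph {E5 E3 : Finset (Finset ℕ)} (h5 : IsUniform 5 E5)
    (h3 : IsUniform 3 E3) : IsUniform 8 (eightGraph E5 E3) := by
  have hsupp (r : ℕ) (hr : r < 5) (E : Finset (Finset ℕ)) :=
    coe_subset_of_mem_residueCopy hr (E := E)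
  have hpairs : ∀ e ∈ auxPairs, ↑e ⊆ {v | v % 5 = 3 ∨ v % 5 = 4} := by
    intro e he v hv
    obtain ⟨i, -, rfl⟩ := mem_image.1 he
    simp only [coe_insert, coe_singleton, Set.mem_insert_iff, Set.mem_singleton_iff] at hv
    change v % 5 = 3 ∨ v % 5 = 4
    omega
  have hdisj {p q : ℕ → Prop} (h : ∀ v, p v → ¬ q v) : Disjoint {v | p v} {v | q v} :=
    Set.disjoint_left.2 h
  refine ((IsUniform.union (IsUniform.union ?_ ?_) ?_).union ?_)
  · exact (h5.image_map _).sups (h3.image_map _) (hsupp 0 (by norm_num) E5)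
      (hsupp 1 (by norm_num) E3) (hdisj fun v => by omega)
  · exact (h5.image_map _).sups (h3.image_map _) (hsupp 0 (by norm_num) E5)
      (hsupp 2 (by norm_num) E3) (hdisj fun v => by omega)
  · refine (((isUniform_pairs fun i => by omega).sups (h3.image_map _) hpairs
      (hsupp 1 (by norm_num) E3) (hdisj fun v => by omega)).sups (h3.image_map _)
      (coe_subset_union_of_mem_sups hpairs (hsupp 1 (by norm_num) E3))
      (hsupp 2 (by norm_num) E3) ?_)
    exact Set.disjoint_union_left.2 ⟨hdisj fun v => by omega, hdisj fun v => by omega⟩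
  · exact isUniform_transversals (· / 5) (fun i => by omega) (fun i => by omega)

theorem not_colorable2_eightGraph {E5 E3 : Finset (Finset ℕ)} (h5 : ¬ Colorable2 E5)
    (h3 : ¬ Colorable2 E3) : ¬ Colorable2 (eightGraph E5 E3) := by
  rw [not_colorable2_iff] at h5 h3 ⊢
  intro χ
  obtain ⟨c, hc⟩ := h5 (χ ∘ residueEmb 0)
  obtain ⟨c1, hc1⟩ := h3 (χ ∘ residueEmb 1)
  obtain ⟨c2, hc2⟩ := h3 (χ ∘ residueEmb 2)
  replace hc := hc.image_map _
  replace hc1 := hc1.image_map _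
  replace hc2 := hc2.image_map _
  by_cases h1 : c1 = c
  · subst h1
    exact ⟨c1, (hc.sups hc1).mono <| subset_union_left.trans <| subset_union_left.trans
      subset_union_left⟩
  by_cases h2 : c2 = c
  · subst h2
    exact ⟨c2, (hc.sups hc2).mono <| subset_union_right.trans <| subset_union_left.trans
      subset_union_left⟩
  rw [Bool.eq_not.2 h1] at hc1
  rw [Bool.eq_not.2 h2] at hc2
  by_cases hpairs : HasMonoEdge χ (!c) auxPairs
  · exact ⟨!c, ((hpairs.sups hc1).sups hc2).mono <| subset_union_right.trans
      subset_union_left⟩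
  obtain ⟨c', hc'⟩ : ∃ c', HasMonoEdge χ c' parityEdges :=
    exists_hasMonoEdge_transversals (by decide) (by decide) hpairs
  exact ⟨c', hc'.mono subset_union_right⟩

/-- `m 8 ≤ 2·m(5)·m(3) + 8·m(3)² + 2^7 + C(8,4)/2`; in particular, using
`m 5 ≤ 51` and `m 3 = 7`, `m 8 ≤ 1269`. -/
theorem m_eight_bound :
    (m 8 ≤ 2 * m 5 * m 3 + 8 * m 3 ^ 2 + 2 ^ 7 + Nat.choose 8 4 / 2) ∧
    (m 5 ≤ 51 → m 3 = 7 → m 8 ≤ 1269) := by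
  obtain ⟨E5, hu5, hc5, hcard5⟩ := exists_isUniform_not_colorable2_card_eq_m 5
  obtain ⟨E3, hu3, hc3, hcard3⟩ := exists_isUniform_not_colorable2_card_eq_m 3
  have hm8 : m 8 ≤ 2 * m 5 * m 3 + 8 * m 3 ^ 2 + 163 := by
    rw [← hcard5, ← hcard3]
    exact (m_le_card (isUniform_eightGraph hu5 hu3) (not_colorable2_eightGraph hc5 hc3)).trans
      (card_eightGraph_le E5 E3)
  have h163 : 2 ^ 7 + Nat.choose 8 4 / 2 = 163 := by rfl
  refine ⟨by omega, fun h5 h3 => ?_⟩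
  rw [h3] at hm8
  linarith
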